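/- arXiv:2601.13586 — 2 statements merged into one kernel-verified Lean document; each statement's English description precedes it below -/
import Mathlib

section
/- Assume μ₁ ≥ μ₂. Then for every (i,k,ℓ) ∈ X̃_diff such that (i+1,k,ℓ) ∈ X̃_diff, one has D(i,k,ℓ) − D(i+1,k,ℓ) ≥ 0; that is, for each fixed pair (k,ℓ) with k + ℓ = C₁ and k ≥ 1, the map i ↦ D(i,k,ℓ) is non-increasing on ℤ≥0. -/
/-!
Write `W i k ℓ = v (i+1) k ℓ - v i k ℓ`, so that `D(i,k,ℓ) - D(i+1,k,ℓ) = W i (k-1) (ℓ+1) - W i k ℓ`.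
Rewriting `min a b` as `a - (a - b)⁺` or `b + min (a - b) 0`, the optimality equation gives
`W (i+1) = h₀ / d + W i` plus corrections weighted by the jump probabilities `kμ₁/d` and
`min(ℓ,C₂)μ₂/d`; since positive and negative parts are monotone, the claim at level `i` controls
every correction. The term `h₀ / d` is handled by `d(k-1,ℓ+1) ≤ d(k,ℓ)`, which is where
`μ₂ ≤ μ₁` enters. At level `0` the values are explicit, `v(0,k,ℓ) = k h₁/μ₁ + Σ_{j ≤ ℓ} γ_j`,
and the claim reduces to the monotonicity of the type-2 sojourn cost `γ_j`.
-/

/-- Overall service rate `d(k,ℓ) = k·μ₁ + min(ℓ,C₂)·μ₂`. -/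
noncomputable def dRate (C₂ : ℕ) (μ₁ μ₂ : ℝ) (k ℓ : ℕ) : ℝ :=
  (k : ℝ) * μ₁ + ((min ℓ C₂ : ℕ) : ℝ) * μ₂

/-- Membership of `(i,k,ℓ)` in the state space `X`. -/
def memX (C₁ : ℕ) (i k ℓ : ℕ) : Prop :=
  (i = 0 ∧ k + ℓ < C₁) ∨ k + ℓ = C₁

/-- `v` satisfies the optimality (Bellman) equations of the clearing system.
Terms whose coefficient `k·μ₁` or `min(ℓ,C₂)·μ₂` vanishes contribute `0`,
matching the convention that such summands are omitted. -/
def IsValue (C₁ C₂ : ℕ) (μ₁ μ₂ h₀ h₁ h₂ : ℝ) (v : ℕ → ℕ → ℕ → ℝ) : Prop :=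
  v 0 0 0 = 0 ∧
  (∀ k ℓ : ℕ, k + ℓ ≤ C₁ → ¬(k = 0 ∧ ℓ = 0) →
    v 0 k ℓ = ((k : ℝ) * h₁ + (ℓ : ℝ) * h₂) / dRate C₂ μ₁ μ₂ k ℓ
      + ((k : ℝ) * μ₁ / dRate C₂ μ₁ μ₂ k ℓ) * v 0 (k - 1) ℓ
      + (((min ℓ C₂ : ℕ) : ℝ) * μ₂ / dRate C₂ μ₁ μ₂ k ℓ) * v 0 k (ℓ - 1)) ∧
  (∀ i k ℓ : ℕ, k + ℓ = C₁ →
    v (i + 1) k ℓ =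
      (((i : ℝ) + 1) * h₀ + (k : ℝ) * h₁ + (ℓ : ℝ) * h₂) / dRate C₂ μ₁ μ₂ k ℓ
      + ((k : ℝ) * μ₁ / dRate C₂ μ₁ μ₂ k ℓ) *
          min (v i k ℓ) (v i (k - 1) (ℓ + 1))
      + (((min ℓ C₂ : ℕ) : ℝ) * μ₂ / dRate C₂ μ₁ μ₂ k ℓ) *
          min (v i (k + 1) (ℓ - 1)) (v i k ℓ))

/-- The difference `D(i,k,ℓ) = v(i,k,ℓ) − v(i,k−1,ℓ+1)`. -/
noncomputable def Dv (v : ℕ → ℕ → ℕ → ℝ) (i k ℓ : ℕ) : ℝ :=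
  v i k ℓ - v i (k - 1) (ℓ + 1)

section Coefficients

variable {C₂ : ℕ} {μ₁ μ₂ : ℝ}

noncomputable def completionProb₁ (C₂ : ℕ) (μ₁ μ₂ : ℝ) (k ℓ : ℕ) : ℝ :=
  (k : ℝ) * μ₁ / dRate C₂ μ₁ μ₂ k ℓ

noncomputable def completionProb₂ (C₂ : ℕ) (μ₁ μ₂ : ℝ) (k ℓ : ℕ) : ℝ :=
  ((min ℓ C₂ : ℕ) : ℝ) * μ₂ / dRate C₂ μ₁ μ₂ k ℓ

lemma completionProb₁_add_completionProb₂ {k ℓ : ℕ} (hd : dRate C₂ μ₁ μ₂ k ℓ ≠ 0) :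
    completionProb₁ C₂ μ₁ μ₂ k ℓ + completionProb₂ C₂ μ₁ μ₂ k ℓ = 1 := by
  rw [completionProb₁, completionProb₂, ← add_div, div_eq_one_iff_eq hd, dRate]

lemma dRate_nonneg (hμ₁ : 0 ≤ μ₁) (hμ₂ : 0 ≤ μ₂) (k ℓ : ℕ) : 0 ≤ dRate C₂ μ₁ μ₂ k ℓ := by
  unfold dRate
  positivity

lemma completionProb₁_nonneg (hμ₁ : 0 ≤ μ₁) (hμ₂ : 0 ≤ μ₂) (k ℓ : ℕ) :
    0 ≤ completionProb₁ C₂ μ₁ μ₂ k ℓ :=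
  div_nonneg (by positivity) (dRate_nonneg hμ₁ hμ₂ k ℓ)

lemma completionProb₂_nonneg (hμ₁ : 0 ≤ μ₁) (hμ₂ : 0 ≤ μ₂) (k ℓ : ℕ) :
    0 ≤ completionProb₂ C₂ μ₁ μ₂ k ℓ :=
  div_nonneg (by positivity) (dRate_nonneg hμ₁ hμ₂ k ℓ)

lemma completionProb₁_le_one (hμ₁ : 0 ≤ μ₁) (hμ₂ : 0 ≤ μ₂) (k ℓ : ℕ) :
    completionProb₁ C₂ μ₁ μ₂ k ℓ ≤ 1 :=
  div_le_one_of_le₀ (le_add_of_nonneg_right (by positivity)) (dRate_nonneg hμ₁ hμ₂ k ℓ)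

lemma completionProb₂_le_one (hμ₁ : 0 ≤ μ₁) (hμ₂ : 0 ≤ μ₂) (k ℓ : ℕ) :
    completionProb₂ C₂ μ₁ μ₂ k ℓ ≤ 1 :=
  div_le_one_of_le₀ (le_add_of_nonneg_left (by positivity)) (dRate_nonneg hμ₁ hμ₂ k ℓ)

lemma dRate_pos (hC₂ : 1 ≤ C₂) (hμ₁ : 0 < μ₁) (hμ₂ : 0 < μ₂) {k ℓ : ℕ} (hkl : k + ℓ ≠ 0) :
    0 < dRate C₂ μ₁ μ₂ k ℓ := by
  unfold dRate
  rcases Nat.eq_zero_or_pos k with rfl | hk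
  · have : 0 < min ℓ C₂ := by omega
    simp only [CharP.cast_eq_zero, zero_mul, zero_add]
    positivity
  · positivity

lemma dRate_succ_right_le_succ_left (hμ₂ : 0 ≤ μ₂) (hμ : μ₂ ≤ μ₁) (k ℓ : ℕ) :
    dRate C₂ μ₁ μ₂ k (ℓ + 1) ≤ dRate C₂ μ₁ μ₂ (k + 1) ℓ := by
  have hmin : ((min (ℓ + 1) C₂ : ℕ) : ℝ) ≤ ((min ℓ C₂ : ℕ) : ℝ) + 1 := by
    exact_mod_cast (show min (ℓ + 1) C₂ ≤ min ℓ C₂ + 1 by omega)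
  unfold dRate
  rw [Nat.cast_succ]
  nlinarith

end Coefficients

section TypeTwoCost

variable {C₂ : ℕ} {μ₂ h₂ : ℝ}

/-- Holding cost incurred by `j` type-2 jobs until the next type-2 completion. -/
noncomputable def sojournCost₂ (C₂ : ℕ) (μ₂ h₂ : ℝ) (j : ℕ) : ℝ :=
  (j : ℝ) * h₂ / (((min j C₂ : ℕ) : ℝ) * μ₂)

noncomputable def clearingCost₂ (C₂ : ℕ) (μ₂ h₂ : ℝ) (ℓ : ℕ) : ℝ :=
  ∑ j ∈ Finset.range ℓ, sojournCost₂ C₂ μ₂ h₂ (j + 1)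

lemma clearingCost₂_succ (ℓ : ℕ) :
    clearingCost₂ C₂ μ₂ h₂ (ℓ + 1) = clearingCost₂ C₂ μ₂ h₂ ℓ + sojournCost₂ C₂ μ₂ h₂ (ℓ + 1) :=
  Finset.sum_range_succ _ _

lemma sojournCost₂_monotone (hμ₂ : 0 ≤ μ₂) (hh₂ : 0 ≤ h₂) :
    Monotone (sojournCost₂ C₂ μ₂ h₂) := by
  refine monotone_nat_of_le_succ fun j => ?_
  unfold sojournCost₂
  rcases lt_or_ge j C₂ with hj | hj
  · rw [min_eq_left hj.le, min_eq_left hj, mul_div_mul_comm, mul_div_mul_comm]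
    refine mul_le_mul_of_nonneg_right ?_ (by positivity)
    calc (j : ℝ) / j ≤ 1 := div_self_le_one _
      _ = ((j + 1 : ℕ) : ℝ) / ((j + 1 : ℕ) : ℝ) := (div_self (by positivity)).symm
  · rw [min_eq_right hj, min_eq_right (by omega)]
    gcongr
    simp

lemma natCast_mul_eq_sojournCost₂ (hC₂ : 1 ≤ C₂) (hμ₂ : μ₂ ≠ 0) (ℓ : ℕ) :
    (ℓ : ℝ) * h₂ = ((min ℓ C₂ : ℕ) : ℝ) * μ₂ * sojournCost₂ C₂ μ₂ h₂ ℓ := by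
  rcases Nat.eq_zero_or_pos ℓ with rfl | hℓ
  · simp
  · have : ((min ℓ C₂ : ℕ) : ℝ) ≠ 0 := by
      have : 0 < min ℓ C₂ := by omega
      positivity
    rw [sojournCost₂, mul_div_cancel₀ _ (mul_ne_zero this hμ₂)]

end TypeTwoCost

lemma min_eq_sub_max_sub_zero {α : Type*} [AddCommGroup α] [LinearOrder α] [IsOrderedAddMonoid α]
    (a b : α) : min a b = a - max (a - b) 0 := by
  rcases le_total a b with h | h
  · simp [h, sub_nonpos.2 h]
  · simp [h, sub_nonneg.2 h]

lemma min_eq_add_min_sub_zero {α : Type*} [AddCommGroup α] [LinearOrder α] [IsOrderedAddMonoid α]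
    (a b : α) : min a b = b + min (a - b) 0 := by
  rcases le_total a b with h | h
  · simp [h, sub_nonpos.2 h]
  · simp [h, sub_nonneg.2 h]

section Value

variable {C₁ C₂ : ℕ} {μ₁ μ₂ h₀ h₁ h₂ : ℝ} {v : ℕ → ℕ → ℕ → ℝ}

theorem IsValue.zero_eq (hv : IsValue C₁ C₂ μ₁ μ₂ h₀ h₁ h₂ v) (hC₂ : 1 ≤ C₂)
    (hμ₁ : 0 < μ₁) (hμ₂ : 0 < μ₂) {k ℓ : ℕ} (hkl : k + ℓ ≤ C₁) :
    v 0 k ℓ = k * (h₁ / μ₁) + clearingCost₂ C₂ μ₂ h₂ ℓ := by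
  induction hn : k + ℓ generalizing k ℓ with
  | zero =>
    obtain ⟨rfl, rfl⟩ : k = 0 ∧ ℓ = 0 := by omega
    simpa [clearingCost₂] using hv.1
  | succ n IH =>
    have hd := dRate_pos hC₂ hμ₁ hμ₂ (C₂ := C₂) (k := k) (ℓ := ℓ) (by omega)
    have hk : (k : ℝ) * v 0 (k - 1) ℓ = k * ((k - 1) * (h₁ / μ₁) + clearingCost₂ C₂ μ₂ h₂ ℓ) := by
      rcases k with _ | k
      · simp
      · rw [Nat.add_sub_cancel, IH (by omega) (by omega)]
        push_cast
        ring
    have hl : ((min ℓ C₂ : ℕ) : ℝ) * v 0 k (ℓ - 1) = ((min ℓ C₂ : ℕ) : ℝ) *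
        (k * (h₁ / μ₁) + clearingCost₂ C₂ μ₂ h₂ ℓ - sojournCost₂ C₂ μ₂ h₂ ℓ) := by
      rcases ℓ with _ | ℓ
      · simp
      · rw [Nat.add_sub_cancel, IH (by omega) (by omega), clearingCost₂_succ]
        ring
    have hγ := natCast_mul_eq_sojournCost₂ (h₂ := h₂) hC₂ hμ₂.ne' ℓ
    rw [hv.2.1 k ℓ hkl (by omega)]
    have hα : μ₁ * (h₁ / μ₁) = h₁ := mul_div_cancel₀ _ hμ₁.ne'
    field_simp
    unfold dRate
    linear_combination μ₁ ^ 2 * hk + μ₁ * μ₂ * hl + μ₁ * hγ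
      - (k * μ₁ - k ^ 2 * μ₁ - (min ℓ C₂ : ℕ) * μ₂ * k) * hα

theorem IsValue.succ_sub_eq (hv : IsValue C₁ C₂ μ₁ μ₂ h₀ h₁ h₂ v) {i k ℓ : ℕ} (hkl : k + ℓ = C₁)
    (hd : dRate C₂ μ₁ μ₂ k ℓ ≠ 0) :
    v (i + 1) k ℓ - v i k ℓ =
      ((i + 1) * h₀ + k * h₁ + ℓ * h₂) / dRate C₂ μ₁ μ₂ k ℓ
        - completionProb₁ C₂ μ₁ μ₂ k ℓ * max (Dv v i k ℓ) 0
        + completionProb₂ C₂ μ₁ μ₂ k ℓ * min (Dv v i (k + 1) (ℓ - 1)) 0 := by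
  have hmin₂ : completionProb₂ C₂ μ₁ μ₂ k ℓ * min (v i (k + 1) (ℓ - 1)) (v i k ℓ) =
      completionProb₂ C₂ μ₁ μ₂ k ℓ * (v i k ℓ + min (Dv v i (k + 1) (ℓ - 1)) 0) := by
    rcases ℓ with _ | ℓ
    · simp [completionProb₂]
    · rw [min_eq_add_min_sub_zero]
      simp only [Dv, Nat.add_sub_cancel]
  have hsum := completionProb₁_add_completionProb₂ hd
  rw [hv.2.2 i k ℓ hkl, min_eq_sub_max_sub_zero (v i k ℓ)]
  change _ + completionProb₁ C₂ μ₁ μ₂ k ℓ * _ + completionProb₂ C₂ μ₁ μ₂ k ℓ * _ - _ = _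
  rw [hmin₂]
  unfold Dv
  linear_combination v i k ℓ * hsum

theorem IsValue.succ_succ_sub_eq (hv : IsValue C₁ C₂ μ₁ μ₂ h₀ h₁ h₂ v) {i k ℓ : ℕ}
    (hkl : k + ℓ = C₁) (hd : dRate C₂ μ₁ μ₂ k ℓ ≠ 0) :
    v (i + 2) k ℓ - v (i + 1) k ℓ =
      h₀ / dRate C₂ μ₁ μ₂ k ℓ + (v (i + 1) k ℓ - v i k ℓ)
        + completionProb₁ C₂ μ₁ μ₂ k ℓ * (max (Dv v i k ℓ) 0 - max (Dv v (i + 1) k ℓ) 0)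
        - completionProb₂ C₂ μ₁ μ₂ k ℓ *
            (min (Dv v i (k + 1) (ℓ - 1)) 0 - min (Dv v (i + 1) (k + 1) (ℓ - 1)) 0) := by
  have e₁ := hv.succ_sub_eq (i := i + 1) hkl hd
  have e₀ := hv.succ_sub_eq (i := i) hkl hd
  push_cast at e₁
  linear_combination e₁ - e₀

theorem IsValue.one_sub_eq (hv : IsValue C₁ C₂ μ₁ μ₂ h₀ h₁ h₂ v) (hC₂ : 1 ≤ C₂)
    (hμ₁ : 0 < μ₁) (hμ₂ : 0 < μ₂) {k ℓ : ℕ} (hkl : k + ℓ = C₁) (hd : dRate C₂ μ₁ μ₂ k ℓ ≠ 0) :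
    v 1 k ℓ - v 0 k ℓ =
      h₀ / dRate C₂ μ₁ μ₂ k ℓ
        + completionProb₁ C₂ μ₁ μ₂ k ℓ * min (h₁ / μ₁) (sojournCost₂ C₂ μ₂ h₂ (ℓ + 1))
        + completionProb₂ C₂ μ₁ μ₂ k ℓ * min (h₁ / μ₁) (sojournCost₂ C₂ μ₂ h₂ ℓ) := by
  have hmax₁ : completionProb₁ C₂ μ₁ μ₂ k ℓ * max (Dv v 0 k ℓ) 0 =
      completionProb₁ C₂ μ₁ μ₂ k ℓ * max (h₁ / μ₁ - sojournCost₂ C₂ μ₂ h₂ (ℓ + 1)) 0 := by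
    rcases k with _ | k
    · simp [completionProb₁]
    · rw [Dv, Nat.add_sub_cancel, hv.zero_eq hC₂ hμ₁ hμ₂ hkl.le,
        hv.zero_eq hC₂ hμ₁ hμ₂ (by omega), clearingCost₂_succ]
      push_cast
      ring_nf
  have hmin₂ : completionProb₂ C₂ μ₁ μ₂ k ℓ * min (Dv v 0 (k + 1) (ℓ - 1)) 0 =
      completionProb₂ C₂ μ₁ μ₂ k ℓ * min (h₁ / μ₁ - sojournCost₂ C₂ μ₂ h₂ ℓ) 0 := by
    rcases ℓ with _ | ℓ
    · simp [completionProb₂]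
    · rw [Dv, Nat.add_sub_cancel, Nat.add_sub_cancel, hv.zero_eq hC₂ hμ₁ hμ₂ (by omega),
        hv.zero_eq hC₂ hμ₁ hμ₂ hkl.le, clearingCost₂_succ]
      push_cast
      ring_nf
  have hk : (k : ℝ) * h₁ / dRate C₂ μ₁ μ₂ k ℓ = completionProb₁ C₂ μ₁ μ₂ k ℓ * (h₁ / μ₁) := by
    rw [completionProb₁]
    field_simp
  have hl : (ℓ : ℝ) * h₂ / dRate C₂ μ₁ μ₂ k ℓ =
      completionProb₂ C₂ μ₁ μ₂ k ℓ * sojournCost₂ C₂ μ₂ h₂ ℓ := by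
    rw [completionProb₂, natCast_mul_eq_sojournCost₂ hC₂ hμ₂.ne']
    ring
  rw [hv.succ_sub_eq hkl hd, hmax₁, hmin₂, min_eq_sub_max_sub_zero (h₁ / μ₁),
    min_eq_add_min_sub_zero (h₁ / μ₁)]
  push_cast
  linear_combination hk + hl

end Value

lemma weighted_le_weighted {p q p' q' x y z : ℝ} (hpq : p + q = 1) (hpq' : p' + q' = 1)
    (hq : 0 ≤ q) (hp' : 0 ≤ p') (hxy : x ≤ y) (hyz : y ≤ z) :
    p * y + q * x ≤ p' * z + q' * y := by
  obtain rfl : p = 1 - q := by linarith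
  obtain rfl : q' = 1 - p' := by linarith
  nlinarith [mul_nonneg hq (sub_nonneg.2 hxy), mul_nonneg hp' (sub_nonneg.2 hyz)]

section Monotonicity

variable {C₁ C₂ : ℕ} {μ₁ μ₂ h₀ h₁ h₂ : ℝ} {v : ℕ → ℕ → ℕ → ℝ}

theorem IsValue.Dv_one_le_Dv_zero (hv : IsValue C₁ C₂ μ₁ μ₂ h₀ h₁ h₂ v) (hC₂ : 1 ≤ C₂)
    (hμ₁ : 0 < μ₁) (hμ₂ : 0 < μ₂) (hh₀ : 0 ≤ h₀) (hh₂ : 0 ≤ h₂) (hμ : μ₂ ≤ μ₁) {j ℓ : ℕ}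
    (hkl : j + 1 + ℓ = C₁) :
    Dv v 1 (j + 1) ℓ ≤ Dv v 0 (j + 1) ℓ := by
  have hM {a b : ℕ} (hab : a ≤ b) :
      min (h₁ / μ₁) (sojournCost₂ C₂ μ₂ h₂ a) ≤ min (h₁ / μ₁) (sojournCost₂ C₂ μ₂ h₂ b) :=
    min_le_min_left _ (sojournCost₂_monotone hμ₂.le hh₂ hab)
  have hd := dRate_pos hC₂ hμ₁ hμ₂ (k := j + 1) (ℓ := ℓ) (by omega)
  have hd' := dRate_pos hC₂ hμ₁ hμ₂ (k := j) (ℓ := ℓ + 1) (by omega)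
  have hcombo := weighted_le_weighted (completionProb₁_add_completionProb₂ hd.ne')
    (completionProb₁_add_completionProb₂ hd'.ne')
    (completionProb₂_nonneg hμ₁.le hμ₂.le _ _) (completionProb₁_nonneg hμ₁.le hμ₂.le _ _)
    (hM (Nat.le_succ ℓ)) (hM (Nat.le_succ (ℓ + 1)))
  have hh₀d : h₀ / dRate C₂ μ₁ μ₂ (j + 1) ℓ ≤ h₀ / dRate C₂ μ₁ μ₂ j (ℓ + 1) :=
    div_le_div_of_nonneg_left hh₀ hd' (dRate_succ_right_le_succ_left hμ₂.le hμ j ℓ)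
  have e := hv.one_sub_eq hC₂ hμ₁ hμ₂ hkl hd.ne'
  have e' := hv.one_sub_eq hC₂ hμ₁ hμ₂ (show j + (ℓ + 1) = C₁ by omega) hd'.ne'
  simp only [Dv, Nat.add_sub_cancel]
  linarith

theorem IsValue.Dv_succ_succ_le (hv : IsValue C₁ C₂ μ₁ μ₂ h₀ h₁ h₂ v) (hC₂ : 1 ≤ C₂)
    (hμ₁ : 0 < μ₁) (hμ₂ : 0 < μ₂) (hh₀ : 0 ≤ h₀) (hμ : μ₂ ≤ μ₁) {i : ℕ}
    (IH : ∀ k ℓ : ℕ, k + ℓ = C₁ → 1 ≤ k → Dv v (i + 1) k ℓ ≤ Dv v i k ℓ)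
    {j ℓ : ℕ} (hkl : j + 1 + ℓ = C₁) :
    Dv v (i + 2) (j + 1) ℓ ≤ Dv v (i + 1) (j + 1) ℓ := by
  have hd := dRate_pos hC₂ hμ₁ hμ₂ (k := j + 1) (ℓ := ℓ) (by omega)
  have hd' := dRate_pos hC₂ hμ₁ hμ₂ (k := j) (ℓ := ℓ + 1) (by omega)
  have e := hv.succ_succ_sub_eq (i := i) hkl hd.ne'
  have e' := hv.succ_succ_sub_eq (i := i) (show j + (ℓ + 1) = C₁ by omega) hd'.ne'
  rw [Nat.add_sub_cancel] at e'
  have hD := IH (j + 1) ℓ hkl (by omega)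
  have hP : 0 ≤ max (Dv v i (j + 1) ℓ) 0 - max (Dv v (i + 1) (j + 1) ℓ) 0 :=
    sub_nonneg.2 (max_le_max_right 0 hD)
  have hQ : 0 ≤ min (Dv v i (j + 1) ℓ) 0 - min (Dv v (i + 1) (j + 1) ℓ) 0 :=
    sub_nonneg.2 (min_le_min_right 0 hD)
  have hsplit := min_add_max (Dv v i (j + 1) ℓ) 0
  have hsplit' := min_add_max (Dv v (i + 1) (j + 1) ℓ) 0
  have hP' : 0 ≤ completionProb₁ C₂ μ₁ μ₂ j (ℓ + 1) *
      (max (Dv v i j (ℓ + 1)) 0 - max (Dv v (i + 1) j (ℓ + 1)) 0) := by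
    rcases j with _ | j
    · simp [completionProb₁]
    · exact mul_nonneg (completionProb₁_nonneg hμ₁.le hμ₂.le _ _)
        (sub_nonneg.2 (max_le_max_right 0 (IH (j + 1) (ℓ + 1) (by omega) (by omega))))
  have hQ' : 0 ≤ completionProb₂ C₂ μ₁ μ₂ (j + 1) ℓ *
      (min (Dv v i (j + 1 + 1) (ℓ - 1)) 0 - min (Dv v (i + 1) (j + 1 + 1) (ℓ - 1)) 0) := by
    rcases ℓ with _ | ℓ
    · simp [completionProb₂]
    · exact mul_nonneg (completionProb₂_nonneg hμ₁.le hμ₂.le _ _)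
        (sub_nonneg.2 (min_le_min_right 0 (IH (j + 1 + 1) ℓ (by omega) (by omega))))
  have hp₁ := completionProb₁_le_one (C₂ := C₂) hμ₁.le hμ₂.le (j + 1) ℓ
  have hp₂ := completionProb₂_le_one (C₂ := C₂) hμ₁.le hμ₂.le j (ℓ + 1)
  have hh₀d : h₀ / dRate C₂ μ₁ μ₂ (j + 1) ℓ ≤ h₀ / dRate C₂ μ₁ μ₂ j (ℓ + 1) :=
    div_le_div_of_nonneg_left hh₀ hd' (dRate_succ_right_le_succ_left hμ₂.le hμ j ℓ)
  have hDv (n : ℕ) : Dv v n (j + 1) ℓ = v n (j + 1) ℓ - v n j (ℓ + 1) := by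
    rw [Dv, Nat.add_sub_cancel]
  rw [hDv, hDv]
  -- `e' - e` exhibits the difference as `(h₀/d' - h₀/d) + (1 - p₁) P + (1 - p₂') Q + hP' + hQ'`
  linarith [hDv i, hDv (i + 1), mul_nonneg (sub_nonneg.2 hp₁) hP, mul_nonneg (sub_nonneg.2 hp₂) hQ]

theorem IsValue.Dv_succ_le (hv : IsValue C₁ C₂ μ₁ μ₂ h₀ h₁ h₂ v) (hC₂ : 1 ≤ C₂)
    (hμ₁ : 0 < μ₁) (hμ₂ : 0 < μ₂) (hh₀ : 0 ≤ h₀) (hh₂ : 0 ≤ h₂) (hμ : μ₂ ≤ μ₁) (i : ℕ) :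
    ∀ k ℓ : ℕ, k + ℓ = C₁ → 1 ≤ k → Dv v (i + 1) k ℓ ≤ Dv v i k ℓ := by
  induction i with
  | zero =>
    rintro (_ | j) ℓ hkl hk
    · omega
    · exact hv.Dv_one_le_Dv_zero hC₂ hμ₁ hμ₂ hh₀ hh₂ hμ hkl
  | succ i IH =>
    rintro (_ | j) ℓ hkl hk
    · omega
    · exact hv.Dv_succ_succ_le hC₂ hμ₁ hμ₂ hh₀ hμ IH hkl

end Monotonicity

theorem stmt0_general
    (C₁ C₂ : ℕ) (hC₂pos : 1 ≤ C₂)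
    (μ₁ μ₂ h₀ h₁ h₂ : ℝ)
    (hμ₁ : 0 < μ₁) (hμ₂ : 0 < μ₂)
    (hh₀ : 0 < h₀) (hh₂ : 0 < h₂)
    (v : ℕ → ℕ → ℕ → ℝ) (hv : IsValue C₁ C₂ μ₁ μ₂ h₀ h₁ h₂ v)
    (hμ : μ₂ ≤ μ₁) :
    ∀ i k ℓ : ℕ, k + ℓ = C₁ → 1 ≤ k →
      0 ≤ Dv v i k ℓ - Dv v (i + 1) k ℓ := fun i k ℓ hkl hk =>
  sub_nonneg.2 (hv.Dv_succ_le hC₂pos hμ₁ hμ₂ hh₀.le hh₂.le hμ i k ℓ hkl hk)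

theorem stmt0
    (C₁ C₂ : ℕ) (hC₂pos : 1 ≤ C₂) (hC : C₂ < C₁)
    (μ₁ μ₂ h₀ h₁ h₂ : ℝ)
    (hμ₁ : 0 < μ₁) (hμ₂ : 0 < μ₂)
    (hh₀ : 0 < h₀) (hh₁ : 0 < h₁) (hh₂ : 0 < h₂)
    (v : ℕ → ℕ → ℕ → ℝ) (hv : IsValue C₁ C₂ μ₁ μ₂ h₀ h₁ h₂ v)
    (hμ : μ₂ ≤ μ₁) :
    ∀ i k ℓ : ℕ, k + ℓ = C₁ → 1 ≤ k →
      0 ≤ Dv v i k ℓ - Dv v (i + 1) k ℓ :=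
  stmt0_general C₁ C₂ hC₂pos μ₁ μ₂ h₀ h₁ h₂ hμ₁ hμ₂ hh₀ hh₂ v hv hμ
end

section
/- Assume μ₂ ≥ μ₁ and h₁/μ₁ ≤ h₂/μ₂. Then for every (i,k,ℓ) ∈ X_diff with ℓ ≥ C₂, D(i,k,ℓ) ≤ 0. -/
/-- expected remaining total sojourn cost factor at station 2 -/
noncomputable def gAux (C₂ : ℕ) (μ₂ : ℝ) : ℕ → ℝ
  | 0 => 0
  | (n+1) => gAux C₂ μ₂ n + ((n : ℝ) + 1) / (((min (n+1) C₂ : ℕ) : ℝ) * μ₂)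

private lemma value_zero_eq (C₁ C₂ : ℕ) (hC₂pos : 1 ≤ C₂)
    (μ₁ μ₂ h₀ h₁ h₂ : ℝ) (hμ₁ : 0 < μ₁) (hμ₂ : 0 < μ₂)
    (v : ℕ → ℕ → ℕ → ℝ) (hv : IsValue C₁ C₂ μ₁ μ₂ h₀ h₁ h₂ v) :
    ∀ k ℓ : ℕ, k + ℓ ≤ C₁ → v 0 k ℓ = (k : ℝ) * h₁ / μ₁ + h₂ * gAux C₂ μ₂ ℓ := by
  suffices H : ∀ n k ℓ : ℕ, k + ℓ = n → k + ℓ ≤ C₁ →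
      v 0 k ℓ = (k : ℝ) * h₁ / μ₁ + h₂ * gAux C₂ μ₂ ℓ by
    exact fun k ℓ h => H (k + ℓ) k ℓ rfl h
  intro n
  induction n using Nat.strong_induction_on with
  | _ n ih =>
    intro k ℓ hn hle
    match k, ℓ with
    | 0, 0 => simp [hv.1, gAux]
    | 0, (m+1) =>
      have hb := hv.2.1 0 (m+1) hle (by simp)
      have hm : (1:ℕ) ≤ min (m+1) C₂ := le_min (by omega) hC₂pos
      have hmr : (1:ℝ) ≤ ((min (m+1) C₂ : ℕ) : ℝ) := by exact_mod_cast hm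
      have hihm := ih m (by omega) 0 m (by omega) (by omega)
      rw [hb]
      simp only [dRate, Nat.cast_zero, zero_mul, zero_add, Nat.add_sub_cancel] at *
      rw [hihm]
      have hne : ((min (m+1) C₂ : ℕ) : ℝ) * μ₂ ≠ 0 := by positivity
      rw [gAux]
      simp only [zero_div, zero_mul, add_zero, zero_add]
      push_cast
      field_simp
      ring
    | (j+1), 0 =>
      have hb := hv.2.1 (j+1) 0 hle (by simp)
      have hihj := ih (j + 0) (by omega) j 0 (by omega) (by omega)
      rw [hb]
      simp only [dRate, Nat.min_self, Nat.add_sub_cancel] at *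
      rw [hihj]
      simp only [gAux]
      simp only [Nat.zero_min, Nat.cast_zero, zero_mul, add_zero, zero_div, mul_zero] at *
      push_cast
      field_simp
      ring
    | (j+1), (m+1) =>
      have hb := hv.2.1 (j+1) (m+1) hle (by simp)
      have hm : (1:ℕ) ≤ min (m+1) C₂ := le_min (by omega) hC₂pos
      have hmr : (1:ℝ) ≤ ((min (m+1) C₂ : ℕ) : ℝ) := by exact_mod_cast hm
      have hih1 := ih (j + (m+1)) (by omega) j (m+1) (by omega) (by omega)
      have hih2 := ih ((j+1) + m) (by omega) (j+1) m (by omega) (by omega)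
      rw [hb]
      simp only [Nat.add_sub_cancel] at *
      rw [hih1, hih2]
      simp only [dRate]
      have hd : ((j:ℝ)+1) * μ₁ + ((min (m+1) C₂ : ℕ):ℝ) * μ₂ > 0 := by positivity
      rw [gAux]
      push_cast
      field_simp
      ring

private lemma D0_le (C₁ C₂ : ℕ) (hC₂pos : 1 ≤ C₂)
    (μ₁ μ₂ h₀ h₁ h₂ : ℝ) (hμ₁ : 0 < μ₁) (hμ₂ : 0 < μ₂) (hh₂ : 0 < h₂)
    (v : ℕ → ℕ → ℕ → ℝ) (hv : IsValue C₁ C₂ μ₁ μ₂ h₀ h₁ h₂ v)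
    (hcost : h₁ / μ₁ ≤ h₂ / μ₂) :
    ∀ k ℓ : ℕ, k + ℓ ≤ C₁ → 1 ≤ k → C₂ ≤ ℓ →
      v 0 k ℓ ≤ v 0 (k - 1) (ℓ + 1) := by
  intro k ℓ hle hk hℓ
  have e1 := value_zero_eq C₁ C₂ hC₂pos μ₁ μ₂ h₀ h₁ h₂ hμ₁ hμ₂ v hv k ℓ hle
  have e2 := value_zero_eq C₁ C₂ hC₂pos μ₁ μ₂ h₀ h₁ h₂ hμ₁ hμ₂ v hv (k-1) (ℓ+1) (by omega)
  rw [e1, e2]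
  have hmin : min (ℓ+1) C₂ = C₂ := min_eq_right (by omega)
  rw [show gAux C₂ μ₂ (ℓ+1) = gAux C₂ μ₂ ℓ + ((ℓ:ℝ)+1) / (((min (ℓ+1) C₂ : ℕ):ℝ) * μ₂) from rfl,
    hmin]
  have hkc : ((k-1:ℕ):ℝ) = (k:ℝ) - 1 := by
    have : (1:ℕ) ≤ k := hk
    push_cast [Nat.cast_sub this]
    ring
  rw [hkc]
  have hC₂r : (1:ℝ) ≤ (C₂:ℝ) := by exact_mod_cast hC₂pos
  have hℓr : (C₂:ℝ) ≤ (ℓ:ℝ) := by exact_mod_cast hℓ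
  -- reduces to h₁/μ₁ ≤ h₂ * (ℓ+1)/(C₂ μ₂)
  have hcost' : h₁ * μ₂ ≤ h₂ * μ₁ := by
    rw [div_le_div_iff₀ hμ₁ hμ₂] at hcost; linarith
  have key : h₁ / μ₁ ≤ h₂ * (((ℓ:ℝ)+1) / ((C₂:ℝ) * μ₂)) := by
    rw [← mul_div_assoc, div_le_div_iff₀ hμ₁ (by positivity : (0:ℝ) < (C₂:ℝ) * μ₂)]
    nlinarith [mul_le_mul_of_nonneg_left hcost' (by positivity : (0:ℝ) ≤ (C₂:ℝ)),
      mul_nonneg (mul_nonneg hh₂.le hμ₁.le) (by linarith : (0:ℝ) ≤ (ℓ:ℝ)+1-(C₂:ℝ))]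
  have expand : (k:ℝ) * h₁ / μ₁ = ((k:ℝ)-1) * h₁ / μ₁ + h₁ / μ₁ := by ring
  rw [expand]
  have : h₂ * (gAux C₂ μ₂ ℓ + ((ℓ:ℝ)+1) / ((C₂:ℝ)*μ₂))
      = h₂ * gAux C₂ μ₂ ℓ + h₂ * (((ℓ:ℝ)+1) / ((C₂:ℝ)*μ₂)) := by ring
  rw [this]
  linarith [key]

set_option maxHeartbeats 1000000 in
private theorem stmt4_aux
    (C₁ C₂ : ℕ) (hC₂pos : 1 ≤ C₂) (hC : C₂ < C₁)
    (μ₁ μ₂ h₀ h₁ h₂ : ℝ)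
    (hμ₁ : 0 < μ₁) (hμ₂ : 0 < μ₂)
    (hh₀ : 0 < h₀) (hh₁ : 0 < h₁) (hh₂ : 0 < h₂)
    (v : ℕ → ℕ → ℕ → ℝ) (hv : IsValue C₁ C₂ μ₁ μ₂ h₀ h₁ h₂ v)
    (hμ : μ₁ ≤ μ₂) (hcost : h₁ / μ₁ ≤ h₂ / μ₂) :
    ∀ i k ℓ : ℕ, k + ℓ = C₁ → 1 ≤ k → C₂ ≤ ℓ → v i k ℓ ≤ v i (k-1) (ℓ+1) := by
  have hcost' : h₁ * μ₂ ≤ h₂ * μ₁ := by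
    rw [div_le_div_iff₀ hμ₁ hμ₂] at hcost; linarith
  have h12 : h₁ ≤ h₂ := by nlinarith
  intro i
  induction i with
  | zero =>
    intro k ℓ hsum hk hℓ
    exact D0_le C₁ C₂ hC₂pos μ₁ μ₂ h₀ h₁ h₂ hμ₁ hμ₂ hh₂ v hv hcost k ℓ (le_of_eq hsum) hk hℓ
  | succ i ih =>
    intro k ℓ hsum hk hℓ
    have hsum' : (k-1) + (ℓ+1) = C₁ := by omega
    have e1 := hv.2.2 i k ℓ hsum
    have e2 := hv.2.2 i (k-1) (ℓ+1) hsum'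
    have hmin1 : min ℓ C₂ = C₂ := min_eq_right hℓ
    have hmin2 : min (ℓ+1) C₂ = C₂ := min_eq_right (by omega)
    have hVW : v i k ℓ ≤ v i (k-1) (ℓ+1) := ih k ℓ hsum hk hℓ
    have m1 : min (v i k ℓ) (v i (k-1) (ℓ+1)) = v i k ℓ := min_eq_left hVW
    have hk1 : (k-1) + 1 = k := by omega
    have hl1 : (ℓ+1) - 1 = ℓ := rfl
    rw [hmin1, m1] at e1
    rw [hmin2, hk1, hl1, m1] at e2
    simp only [dRate, hmin1, hmin2] at e1 e2
    set V := v i k ℓ with hV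
    set M := min (v i (k+1) (ℓ-1)) V with hMdef
    set X := min (v i (k-1) (ℓ+1)) (v i (k-1-1) (ℓ+1+1)) with hXdef
    have hkc : ((k-1:ℕ):ℝ) = (k:ℝ) - 1 := by
      push_cast [Nat.cast_sub hk]; ring
    have hkr : (1:ℝ) ≤ (k:ℝ) := by exact_mod_cast hk
    have hC₂r : (1:ℝ) ≤ (C₂:ℝ) := by exact_mod_cast hC₂pos
    have hd : (0:ℝ) < (k:ℝ) * μ₁ + (C₂:ℝ) * μ₂ := by positivity
    have hd' : (0:ℝ) < ((k:ℝ) - 1) * μ₁ + (C₂:ℝ) * μ₂ := by nlinarith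
    rw [hkc] at e2
    -- bounds on the mins
    have hM : M ≤ V := min_le_right _ _
    have hXV : ((k:ℝ) - 1) * μ₁ * V ≤ ((k:ℝ) - 1) * μ₁ * X := by
      rcases Nat.lt_or_ge k 2 with h2 | h2
      · have : k = 1 := by omega
        subst this
        simp
      · have hW2 : v i (k-1) (ℓ+1) ≤ v i (k-1-1) (ℓ+1+1) :=
          ih (k-1) (ℓ+1) hsum' (by omega) (by omega)
        have hX : X = v i (k-1) (ℓ+1) := min_eq_left hW2
        have : V ≤ X := by rw [hX]; exact hVW
        have hc : (0:ℝ) ≤ ((k:ℝ) - 1) * μ₁ := by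
          have : (2:ℝ) ≤ (k:ℝ) := by exact_mod_cast h2
          nlinarith
        exact mul_le_mul_of_nonneg_left this hc
    clear_value V M X
    rw [e1, e2]
    push_cast
    have hd : (0:ℝ) < (k:ℝ) * μ₁ + (C₂:ℝ) * μ₂ := by positivity
    have hd' : (0:ℝ) < ((k:ℝ) - 1) * μ₁ + (C₂:ℝ) * μ₂ := by nlinarith
    have hA0 : (0:ℝ) < ((i:ℝ) + 1) * h₀ := by positivity
    have hℓr : (0:ℝ) ≤ (ℓ:ℝ) := Nat.cast_nonneg _
    have base : (((i:ℝ)+1)*h₀ + (k:ℝ)*h₁ + (ℓ:ℝ)*h₂) * (((k:ℝ)-1)*μ₁ + (C₂:ℝ)*μ₂)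
        ≤ (((i:ℝ)+1)*h₀ + ((k:ℝ)-1)*h₁ + ((ℓ:ℝ)+1)*h₂) * ((k:ℝ)*μ₁ + (C₂:ℝ)*μ₂) := by
      have b1 : 0 ≤ (((k:ℝ)-1)*μ₁ + (C₂:ℝ)*μ₂) * (h₂ - h₁) := mul_nonneg hd'.le (by linarith)
      have b2 : 0 ≤ ((i:ℝ)+1)*h₀*μ₁ := by positivity
      have b3 : 0 ≤ (((k:ℝ)-1)*h₁ + ((ℓ:ℝ)+1)*h₂) * μ₁ := by
        have c1 : 0 ≤ ((k:ℝ)-1)*h₁ := mul_nonneg (by linarith) hh₁.le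
        have c2 : 0 ≤ ((ℓ:ℝ)+1)*h₂ := by positivity
        have c3 : 0 ≤ ((k:ℝ)-1)*h₁ + ((ℓ:ℝ)+1)*h₂ := by linarith
        exact mul_nonneg c3 hμ₁.le
      nlinarith [b1, b2, b3]
    have t1 : ((C₂:ℝ)*μ₂*M) * (((k:ℝ)-1)*μ₁ + (C₂:ℝ)*μ₂)
        ≤ ((C₂:ℝ)*μ₂*V) * (((k:ℝ)-1)*μ₁ + (C₂:ℝ)*μ₂) :=
      mul_le_mul_of_nonneg_right (mul_le_mul_of_nonneg_left hM (by positivity)) hd'.le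
    have t2 : (((k:ℝ)-1)*μ₁*V) * ((k:ℝ)*μ₁ + (C₂:ℝ)*μ₂)
        ≤ (((k:ℝ)-1)*μ₁*X) * ((k:ℝ)*μ₁ + (C₂:ℝ)*μ₂) :=
      mul_le_mul_of_nonneg_right hXV hd.le
    have key : (((i:ℝ)+1)*h₀ + (k:ℝ)*h₁ + (ℓ:ℝ)*h₂ + (k:ℝ)*μ₁*V + (C₂:ℝ)*μ₂*M)
          * (((k:ℝ)-1)*μ₁ + (C₂:ℝ)*μ₂)
        ≤ (((i:ℝ)+1)*h₀ + ((k:ℝ)-1)*h₁ + ((ℓ:ℝ)+1)*h₂ + ((k:ℝ)-1)*μ₁*X + (C₂:ℝ)*μ₂*V)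
          * ((k:ℝ)*μ₁ + (C₂:ℝ)*μ₂) := by nlinarith [base, t1, t2]
    calc (((i:ℝ)+1)*h₀ + (k:ℝ)*h₁ + (ℓ:ℝ)*h₂) / ((k:ℝ)*μ₁ + (C₂:ℝ)*μ₂)
          + (k:ℝ)*μ₁/((k:ℝ)*μ₁ + (C₂:ℝ)*μ₂) * V + (C₂:ℝ)*μ₂/((k:ℝ)*μ₁ + (C₂:ℝ)*μ₂) * M
        = (((i:ℝ)+1)*h₀ + (k:ℝ)*h₁ + (ℓ:ℝ)*h₂ + (k:ℝ)*μ₁*V + (C₂:ℝ)*μ₂*M)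
            / ((k:ℝ)*μ₁ + (C₂:ℝ)*μ₂) := by ring
      _ ≤ (((i:ℝ)+1)*h₀ + ((k:ℝ)-1)*h₁ + ((ℓ:ℝ)+1)*h₂ + ((k:ℝ)-1)*μ₁*X + (C₂:ℝ)*μ₂*V)
            / (((k:ℝ)-1)*μ₁ + (C₂:ℝ)*μ₂) := by
          rw [div_le_div_iff₀ hd hd']; exact key
      _ = (((i:ℝ)+1)*h₀ + ((k:ℝ)-1)*h₁ + ((ℓ:ℝ)+1)*h₂) / (((k:ℝ)-1)*μ₁ + (C₂:ℝ)*μ₂)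
          + ((k:ℝ)-1)*μ₁/(((k:ℝ)-1)*μ₁ + (C₂:ℝ)*μ₂) * X
          + (C₂:ℝ)*μ₂/(((k:ℝ)-1)*μ₁ + (C₂:ℝ)*μ₂) * V := by ring

theorem stmt4
    (C₁ C₂ : ℕ) (hC₂pos : 1 ≤ C₂) (hC : C₂ < C₁)
    (μ₁ μ₂ h₀ h₁ h₂ : ℝ)
    (hμ₁ : 0 < μ₁) (hμ₂ : 0 < μ₂)
    (hh₀ : 0 < h₀) (hh₁ : 0 < h₁) (hh₂ : 0 < h₂)
    (v : ℕ → ℕ → ℕ → ℝ) (hv : IsValue C₁ C₂ μ₁ μ₂ h₀ h₁ h₂ v)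
    (hμ : μ₁ ≤ μ₂) (hcost : h₁ / μ₁ ≤ h₂ / μ₂) :
    ∀ i k ℓ : ℕ, memX C₁ i k ℓ → 1 ≤ k → C₂ ≤ ℓ → Dv v i k ℓ ≤ 0 := by
  intro i k ℓ hmem hk hℓ
  rw [Dv, sub_nonpos]
  rcases hmem with ⟨hi0, hlt⟩ | heq
  · subst hi0
    exact D0_le C₁ C₂ hC₂pos μ₁ μ₂ h₀ h₁ h₂ hμ₁ hμ₂ hh₂ v hv hcost k ℓ (le_of_lt hlt) hk hℓ
  · exact stmt4_aux C₁ C₂ hC₂pos hC μ₁ μ₂ h₀ h₁ h₂ hμ₁ hμ₂ hh₀ hh₁ hh₂ v hv hμ hcost i k ℓ heq hk hℓ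
end
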